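/- arXiv:1808.10734 — 4 statements merged into one kernel-verified Lean document; each statement's English description precedes it below -/
import Mathlib

section
/- For all real z with 0 ≤ z ≤ 1, (1+z)·ln(4(z+1)/(z+4)) + (1−z)·ln((z+4)/4) − z ≤ 0. -/
/-!
Write the left-hand side as `(1 + z) log (1 + z) - 2z log (1 + z/4) - z`. Bound the first logarithm
above by its Padé approximant `log (1 + x) ≤ x (6 + x) / (6 + 4x)` and the second below by
`log (1 + u) ≥ u / (1 + u)`. The resulting rational function of `z` equals
`z³ (z - 1) / ((6 + 4z)(z + 4))`, which is nonpositive on `[0, 1]`.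
-/

open Real Set

lemma hasDerivAt_pade_sub_log {x : ℝ} (hx : -1 < x) :
    HasDerivAt (fun t : ℝ => t * (6 + t) / (6 + 4 * t) - log (1 + t))
      (x ^ 3 / ((1 + x) * (3 + 2 * x) ^ 2)) x := by
  have h1x : 1 + x ≠ 0 := by linarith
  have h3x : 3 + 2 * x ≠ 0 := by linarith
  have hden : 6 + 4 * x ≠ 0 := by linarith
  have hlog : HasDerivAt (fun t : ℝ => log (1 + t)) (1 / (1 + x)) x := by
    simpa using ((hasDerivAt_id x).const_add 1).log h1x
  have hquot := (hasDerivAt_id' x |>.fun_mul (hasDerivAt_id' x |>.const_add 6)).fun_div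
    (hasDerivAt_id' x |>.const_mul 4 |>.const_add 6) hden
  refine (hquot.fun_sub hlog).congr_deriv ?_
  rw [div_sub_div _ _ (pow_ne_zero 2 hden) h1x,
    div_eq_div_iff (mul_ne_zero (pow_ne_zero 2 hden) h1x) (mul_ne_zero h1x (pow_ne_zero 2 h3x))]
  ring

lemma log_one_add_le_pade {x : ℝ} (hx : 0 ≤ x) : log (1 + x) ≤ x * (6 + x) / (6 + 4 * x) := by
  have hderiv (t : ℝ) (ht : t ∈ Ici 0) :=
    hasDerivAt_pade_sub_log (x := t) (by linarith [mem_Ici.mp ht])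
  have hmono : MonotoneOn (fun t : ℝ => t * (6 + t) / (6 + 4 * t) - log (1 + t)) (Ici 0) := by
    refine monotoneOn_of_hasDerivWithinAt_nonneg (convex_Ici 0)
      (fun t ht => (hderiv t ht).continuousAt.continuousWithinAt)
      (fun t ht => (hderiv t (interior_subset ht)).hasDerivWithinAt) (fun t ht => ?_)
    have ht : 0 ≤ t := interior_subset ht
    positivity
  simpa using hmono self_mem_Ici hx hx

theorem stmt_1 (z : ℝ) (h0 : 0 ≤ z) (h1 : z ≤ 1) :
    (1 + z) * Real.log (4 * (z + 1) / (z + 4)) + (1 - z) * Real.log ((z + 4) / 4) - z ≤ 0 := by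
  have hsplit : log (4 * (z + 1) / (z + 4)) = log (1 + z) - log ((z + 4) / 4) := by
    rw [← log_div (by positivity) (by positivity)]
    congr 1
    field_simp
    ring
  have hup := mul_le_mul_of_nonneg_left (log_one_add_le_pade h0) (by linarith : 0 ≤ 1 + z)
  have hlog_ge : z / (z + 4) ≤ log ((z + 4) / 4) :=
    calc z / (z + 4) = 1 - ((z + 4) / 4)⁻¹ := by field_simp; ring
      _ ≤ log ((z + 4) / 4) := one_sub_inv_le_log_of_pos (by positivity)
  have hlow := mul_le_mul_of_nonneg_left hlog_ge (by linarith : 0 ≤ 2 * z)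
  have hrational : (1 + z) * (z * (6 + z) / (6 + 4 * z)) - 2 * z * (z / (z + 4)) - z ≤ 0 := by
    have hcube : (1 + z) * (z * (6 + z) / (6 + 4 * z)) - 2 * z * (z / (z + 4)) - z
        = z ^ 3 * (z - 1) / ((6 + 4 * z) * (z + 4)) := by
      field_simp
      ring
    rw [hcube]
    exact div_nonpos_of_nonpos_of_nonneg
      (mul_nonpos_of_nonneg_of_nonpos (by positivity) (by linarith)) (by positivity)
  rw [hsplit]
  linarith
end

section
/- For all real z ≥ 0, ln(16(z+1)/(z+4)²) − 2z/(z+4) ≤ 0. -/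
/-! Since `log x ≤ x - 1`, it suffices that `16 (z + 1) / (z + 4)² - 1 ≤ 2z / (z + 4)`,
and the difference of the two sides is exactly `-3 (z / (z + 4))²`. -/

lemma sixteen_mul_add_one_div_sq_sub_one {z : ℝ} (hz : z + 4 ≠ 0) :
    16 * (z + 1) / (z + 4) ^ 2 - 1 = 2 * z / (z + 4) - 3 * (z / (z + 4)) ^ 2 := by
  field_simp
  ring

theorem stmt_2 (z : ℝ) (hz : 0 ≤ z) :
    Real.log (16 * (z + 1) / (z + 4) ^ 2) - 2 * z / (z + 4) ≤ 0 := by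
  have hz4 : z + 4 ≠ 0 := by linarith
  have hlog : Real.log (16 * (z + 1) / (z + 4) ^ 2) ≤ 2 * z / (z + 4) :=
    calc Real.log (16 * (z + 1) / (z + 4) ^ 2)
        ≤ 16 * (z + 1) / (z + 4) ^ 2 - 1 := Real.log_le_sub_one_of_pos (by positivity)
      _ = 2 * z / (z + 4) - 3 * (z / (z + 4)) ^ 2 := sixteen_mul_add_one_div_sq_sub_one hz4
      _ ≤ 2 * z / (z + 4) := sub_le_self _ (by positivity)
  linarith
end

section
/- Define h(σ) = 4/(4+σ). For every z with 0 ≤ z ≤ 1, ∫_z^1 max{0, h(σ) − 1 + z·h(σ)} dσ + ∫_0^z (h(σ) − 1 − z·h(σ)) dσ ≤ 0. -/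
/-!
Both integrands are affine in `h σ = 4 / (4 + σ)`. The second one, `(1 - z) h σ - 1`, is never
positive, and the positive part in the first vanishes exactly for `σ ≥ 4 z`, so both integrals are
explicit: with `m = min (4 z) 1` the left-hand side is
`4 (1 + z) log ((4 + m) / (4 + z)) - (m - z) + 4 (1 - z) log ((4 + z) / 4) - z`.
The two second-order terms of this expression cancel as `z → 0`, so the estimate needs the cubic
bound `log (1 + x) ≤ x - x² / 2 + x³ / 3`; after it, what remains is a polynomial inequality on
each of the ranges `z ≤ 1/4` and `z ≥ 1/4`.
-/

open Real intervalIntegral Set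

theorem continuousOn_div_const_add {k a b : ℝ} (c : ℝ) (ha : 0 < k + a) (hb : 0 < k + b) :
    ContinuousOn (fun x => c / (k + x)) (uIcc a b) := by
  refine continuousOn_const.div (by fun_prop) fun x hx => ?_
  rcases mem_uIcc.1 hx with ⟨hax, -⟩ | ⟨hbx, -⟩ <;> linarith

theorem integral_div_const_add {k a b : ℝ} (c : ℝ) (ha : 0 < k + a) (hb : 0 < k + b) :
    ∫ x in a..b, c / (k + x) = c * log ((k + b) / (k + a)) := by
  simp only [div_eq_mul_inv c, intervalIntegral.integral_const_mul,
    integral_comp_add_left (fun x => x⁻¹), integral_inv_of_pos ha hb]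

theorem integral_div_const_add_sub_one {k a b : ℝ} (c : ℝ) (ha : 0 < k + a) (hb : 0 < k + b) :
    ∫ x in a..b, (c / (k + x) - 1) = c * log ((k + b) / (k + a)) - (b - a) := by
  rw [integral_sub (continuousOn_div_const_add c ha hb).intervalIntegrable intervalIntegrable_const,
    integral_div_const_add c ha hb, intervalIntegral.integral_const, smul_eq_mul, mul_one]

theorem integral_max_zero_eq_of_sign_change {g : ℝ → ℝ} {a m b : ℝ} (ham : a ≤ m) (hmb : m ≤ b)
    (hg : ContinuousOn g (Icc a b)) (hpos : ∀ x ∈ Icc a m, 0 ≤ g x)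
    (hneg : ∀ x ∈ Ioc m b, g x ≤ 0) :
    ∫ x in a..b, max 0 (g x) = ∫ x in a..m, g x := by
  have hint : ContinuousOn (fun x => max 0 (g x)) (Icc a b) := continuousOn_const.sup hg
  rw [← integral_add_adjacent_intervals (b := m)
      ((hint.mono (Icc_subset_Icc_right hmb)).intervalIntegrable_of_Icc ham)
      ((hint.mono (Icc_subset_Icc_left ham)).intervalIntegrable_of_Icc hmb),
    integral_of_le hmb (a := m),
    MeasureTheory.setIntegral_eq_zero_of_forall_eq_zero fun x hx => max_eq_left (hneg x hx),
    add_zero]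
  exact integral_congr fun x hx => max_eq_right (hpos x (by rwa [uIcc_of_le ham] at hx))

theorem log_one_add_le_cubic {x : ℝ} (hx : 0 ≤ x) : log (1 + x) ≤ x - x ^ 2 / 2 + x ^ 3 / 3 := by
  have h1x : (0 : ℝ) < 1 + x := by linarith
  calc log (1 + x) = ∫ t in (0 : ℝ)..x, 1 / (1 + t) := by
        rw [integral_div_const_add 1 (by norm_num) h1x, add_zero, div_one, one_mul]
    _ ≤ ∫ t in (0 : ℝ)..x, (1 - t + t ^ 2) := by
        refine integral_mono_on hx (continuousOn_div_const_add 1 (by norm_num) h1x).intervalIntegrable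
          ((by fun_prop : Continuous fun t : ℝ => 1 - t + t ^ 2).intervalIntegrable _ _)
          fun t ht => ?_
        -- `(1 + t) (1 - t + t²) = 1 + t³ ≥ 1`
        rw [div_le_iff₀ (by linarith [ht.1])]
        nlinarith [pow_nonneg ht.1 3]
    _ = x - x ^ 2 / 2 + x ^ 3 / 3 := by
        rw [integral_add ((by fun_prop : Continuous fun t : ℝ => 1 - t).intervalIntegrable _ _)
            ((continuous_pow 2).intervalIntegrable _ _),
          integral_sub intervalIntegrable_const intervalIntegrable_id, integral_pow, integral_id,
          intervalIntegral.integral_const]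
        rw [smul_eq_mul]
        ring

theorem log_div_le_cubic {a b : ℝ} (ha : 0 < a) (hab : a ≤ b) :
    log (b / a) ≤ (b - a) / a - ((b - a) / a) ^ 2 / 2 + ((b - a) / a) ^ 3 / 3 := by
  have := log_one_add_le_cubic (div_nonneg (sub_nonneg.2 hab) ha.le)
  rwa [one_add_div ha.ne', add_sub_cancel] at this

theorem log_bound_of_le_quarter {z : ℝ} (hz0 : 0 ≤ z) (hz : 4 * z ≤ 1) :
    4 * (1 + z) * log ((4 + 4 * z) / (4 + z)) + 4 * (1 - z) * log ((4 + z) / 4) ≤ 4 * z := by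
  have hz4 : 0 < 4 + z := by linarith
  have h1 := mul_le_mul_of_nonneg_left (log_div_le_cubic hz4 (by linarith : 4 + z ≤ 4 + 4 * z))
    (by linarith : 0 ≤ 4 * (1 + z))
  have h2 := mul_le_mul_of_nonneg_left (log_div_le_cubic four_pos (by linarith : 4 ≤ 4 + z))
    (by linarith : 0 ≤ 4 * (1 - z))
  refine (add_le_add h1 h2).trans (sub_nonneg.1 ?_)
  -- the slack is `z³ P(z) / (192 (4 + z)³)`: it vanishes to third order at `z = 0`
  have hP : 0 ≤ 5120 - 3680 * z + 72 * z ^ 2 + 20 * z ^ 3 + 4 * z ^ 4 := by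
    nlinarith [pow_nonneg hz0 2, pow_nonneg hz0 3, pow_nonneg hz0 4]
  convert div_nonneg (mul_nonneg (pow_nonneg hz0 3) hP) (by positivity : (0 : ℝ) ≤ 192 * (4 + z) ^ 3)
    using 1
  field_simp
  ring

theorem log_bound_of_quarter_le {z : ℝ} (hz : 1 ≤ 4 * z) (hz1 : z ≤ 1) :
    4 * (1 + z) * log ((4 + 1) / (4 + z)) + 4 * (1 - z) * log ((4 + z) / 4) ≤ 1 := by
  have hz0 : 0 ≤ z := by linarith
  have hz4 : 0 < 4 + z := by linarith
  have h1 := mul_le_mul_of_nonneg_left (log_div_le_cubic hz4 (by linarith : 4 + z ≤ 4 + 1))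
    (by linarith : 0 ≤ 4 * (1 + z))
  have h2 := mul_le_mul_of_nonneg_left (log_div_le_cubic four_pos (by linarith : 4 ≤ 4 + z))
    (by linarith : 0 ≤ 4 * (1 - z))
  refine (add_le_add h1 h2).trans (sub_nonneg.1 ?_)
  have hP : 0 ≤ 1280 - 9856 * z + 16512 * z ^ 2 + 13248 * z ^ 3 + 2720 * z ^ 4 + 72 * z ^ 5
      + 20 * z ^ 6 + 4 * z ^ 7 := by
    nlinarith [mul_nonneg (by linarith : (0 : ℝ) ≤ 4 * z - 1) (sq_nonneg z), sq_nonneg (z - 1 / 4),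
      pow_nonneg hz0 4, pow_nonneg hz0 5, pow_nonneg hz0 6, pow_nonneg hz0 7]
  convert div_nonneg hP (by positivity : (0 : ℝ) ≤ 192 * (4 + z) ^ 3) using 1
  field_simp
  ring

theorem integral_max_zero_div_four_add_sub_one {z : ℝ} (hz0 : 0 ≤ z) (hz1 : z ≤ 1) :
    ∫ σ in z..1, max 0 (4 * (1 + z) / (4 + σ) - 1)
      = 4 * (1 + z) * log ((4 + min (4 * z) 1) / (4 + z)) - (min (4 * z) 1 - z) := by
  have hcont : ContinuousOn (fun σ => 4 * (1 + z) / (4 + σ) - 1) (Icc z 1) := by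
    rw [← uIcc_of_le hz1]
    exact (continuousOn_div_const_add _ (by linarith) (by linarith)).sub continuousOn_const
  have hzm : z ≤ min (4 * z) 1 := le_min (by linarith) hz1
  rw [integral_max_zero_eq_of_sign_change hzm (min_le_right _ _) hcont
    (fun σ hσ => by
      rw [sub_nonneg, one_le_div₀ (by linarith [hσ.1])]
      linarith [hσ.2, min_le_left (4 * z) 1])
    (fun σ hσ => by
      rw [sub_nonpos, div_le_one₀ (by linarith [hσ.1])]
      rcases min_lt_iff.1 hσ.1 with hσ4z | hσ1 <;> linarith [hσ.2]),
    integral_div_const_add_sub_one _ (by linarith) (by linarith)]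

theorem stmt_6 (h : ℝ → ℝ) (hh : ∀ σ, h σ = 4 / (4 + σ))
    (z : ℝ) (hz0 : 0 ≤ z) (hz1 : z ≤ 1) :
    (∫ σ in z..1, max 0 (h σ - 1 + z * h σ)) + ∫ σ in (0:ℝ)..z, (h σ - 1 - z * h σ) ≤ 0 := by
  have hupper (σ : ℝ) : h σ - 1 + z * h σ = 4 * (1 + z) / (4 + σ) - 1 := by rw [hh]; ring
  have hlower (σ : ℝ) : h σ - 1 - z * h σ = 4 * (1 - z) / (4 + σ) - 1 := by rw [hh]; ring
  simp only [hupper, hlower]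
  rw [integral_max_zero_div_four_add_sub_one hz0 hz1,
    integral_div_const_add_sub_one _ (by norm_num) (by linarith), add_zero, sub_zero]
  rcases min_cases (4 * z) 1 with ⟨hm, hz⟩ | ⟨hm, hz⟩ <;> rw [hm]
  · linarith [log_bound_of_le_quarter hz0 hz]
  · linarith [log_bound_of_quarter_le hz.le hz1]
end

section
/- Define h(σ) = 4/(4+σ). For every z with 0 ≤ z ≤ 1: ∫_z^1 max{0, h(σ) − 1 + z·h(σ)} dσ ≤ ∫_0^z (1 − h(σ) + z·h(σ)) dσ. -/
/-!
Both integrands are affine in `h σ = 4 / (4 + σ)`, and `h` lies below its quadratic Taylor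
polynomial `1 - σ/4 + σ²/16` for `σ ≥ 0`. The positive part on the left vanishes exactly for
`σ ≥ 4z`, so the left side is at most the integral of the polynomial majorant over
`[z, min 1 (4z)]`, while the right side is at least the integral of the polynomial minorant over
`[0, z]`. What remains is a polynomial inequality in `z`, split at `z = 1/4`. Both sides agree
to second order at `z = 0`, so the quadratic Taylor term cannot be dropped.
-/

open intervalIntegral MeasureTheory Set

noncomputable section

def taylorQuad (σ : ℝ) : ℝ := 1 - σ / 4 + σ ^ 2 / 16

def taylorQuadPrimitive (σ : ℝ) : ℝ := σ - σ ^ 2 / 8 + σ ^ 3 / 48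

end

lemma four_div_four_add_le_taylorQuad {σ : ℝ} (hσ : 0 ≤ σ) : 4 / (4 + σ) ≤ taylorQuad σ := by
  rw [taylorQuad, div_le_iff₀ (by linarith)]
  nlinarith [pow_nonneg hσ 3]

lemma continuous_taylorQuad : Continuous taylorQuad := by
  unfold taylorQuad
  fun_prop

lemma intervalIntegrable_affine_taylorQuad (α β a b : ℝ) :
    IntervalIntegrable (fun σ => α + β * taylorQuad σ) volume a b :=
  (continuous_const.add (continuous_const.mul continuous_taylorQuad)).intervalIntegrable a b

lemma continuousOn_four_div_four_add : ContinuousOn (fun σ : ℝ => 4 / (4 + σ)) (Ici 0) :=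
  continuousOn_const.div (by fun_prop) fun σ (hσ : 0 ≤ σ) => by positivity

lemma integral_affine_taylorQuad (α β a b : ℝ) :
    ∫ σ in a..b, (α + β * taylorQuad σ) =
      α * (b - a) + β * (taylorQuadPrimitive b - taylorQuadPrimitive a) := by
  have hderiv : ∀ σ ∈ uIcc a b, HasDerivAt (fun σ => α * σ + β * taylorQuadPrimitive σ)
      (α + β * taylorQuad σ) σ := by
    intro σ _
    have h := ((hasDerivAt_id' σ).const_mul α).add
      ((((hasDerivAt_id' σ).sub ((hasDerivAt_pow 2 σ).div_const 8)).add
        ((hasDerivAt_pow 3 σ).div_const 48)).const_mul β)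
    exact h.congr_deriv (by unfold taylorQuad; push_cast; ring)
  rw [integral_eq_sub_of_hasDerivAt hderiv (intervalIntegrable_affine_taylorQuad α β a b)]
  ring

section

variable {z σ : ℝ}

lemma lonely_eq_div (hσ : 0 ≤ σ) :
    4 / (4 + σ) - 1 + z * (4 / (4 + σ)) = (4 * z - σ) / (4 + σ) := by
  field_simp
  ring

lemma lonely_le_taylorQuad (hz : 0 ≤ z) (hσ : 0 ≤ σ) (hσz : σ ≤ 4 * z) :
    max 0 (4 / (4 + σ) - 1 + z * (4 / (4 + σ))) ≤ -1 + (1 + z) * taylorQuad σ := by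
  have hle : 4 / (4 + σ) - 1 + z * (4 / (4 + σ)) ≤ -1 + (1 + z) * taylorQuad σ := by
    nlinarith [four_div_four_add_le_taylorQuad hσ]
  have hnonneg : 0 ≤ 4 / (4 + σ) - 1 + z * (4 / (4 + σ)) := by
    rw [lonely_eq_div hσ]
    exact div_nonneg (by linarith) (by linarith)
  exact max_le (hnonneg.trans hle) hle

lemma lonely_nonpos (hσ : 0 ≤ σ) (hσz : 4 * z ≤ σ) :
    4 / (4 + σ) - 1 + z * (4 / (4 + σ)) ≤ 0 := by
  rw [lonely_eq_div hσ]
  exact div_nonpos_of_nonpos_of_nonneg (by linarith) (by linarith)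

lemma repair_ge_taylorQuad (hz1 : z ≤ 1) (hσ : 0 ≤ σ) :
    1 + -(1 - z) * taylorQuad σ ≤ 1 - 4 / (4 + σ) + z * (4 / (4 + σ)) := by
  nlinarith [four_div_four_add_le_taylorQuad hσ]

end

section

variable {z : ℝ}

lemma intervalIntegrable_lonely {a b : ℝ} (ha : 0 ≤ a) (hb : 0 ≤ b) :
    IntervalIntegrable (fun σ => max 0 (4 / (4 + σ) - 1 + z * (4 / (4 + σ)))) volume a b := by
  refine ContinuousOn.intervalIntegrable (continuousOn_const.sup ?_)
  refine ((continuousOn_four_div_four_add.sub continuousOn_const).add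
    (continuousOn_const.mul continuousOn_four_div_four_add)).mono ?_
  exact ordConnected_Ici.uIcc_subset ha hb

variable (hz0 : 0 ≤ z) (hz1 : z ≤ 1)
include hz0 hz1

lemma integral_lonely_le :
    ∫ σ in z..1, max 0 (4 / (4 + σ) - 1 + z * (4 / (4 + σ))) ≤
      ∫ σ in z..min 1 (4 * z), (-1 + (1 + z) * taylorQuad σ) := by
  set m := min 1 (4 * z) with hm
  have hzm : z ≤ m := le_min hz1 (by linarith)
  have hm0 : 0 ≤ m := hz0.trans hzm
  rw [← integral_add_adjacent_intervals (intervalIntegrable_lonely hz0 hm0)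
    (intervalIntegrable_lonely hm0 zero_le_one)]
  have head : ∫ σ in z..m, max 0 (4 / (4 + σ) - 1 + z * (4 / (4 + σ))) ≤
      ∫ σ in z..m, (-1 + (1 + z) * taylorQuad σ) :=
    integral_mono_on hzm (intervalIntegrable_lonely hz0 hm0)
      (intervalIntegrable_affine_taylorQuad _ _ _ _)
      fun σ hσ => lonely_le_taylorQuad hz0 (hz0.trans hσ.1) (hσ.2.trans (min_le_right _ _))
  have tail : ∫ σ in m..1, max 0 (4 / (4 + σ) - 1 + z * (4 / (4 + σ))) = 0 := by
    rcases min_cases 1 (4 * z) with ⟨hm1, -⟩ | ⟨hm4, -⟩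
    · rw [hm, hm1, integral_same]
    · have h4z : 4 * z ≤ 1 := hm4 ▸ min_le_left _ _
      rw [hm, hm4]
      refine (integral_congr fun σ hσ => ?_).trans intervalIntegral.integral_zero
      rw [uIcc_of_le h4z] at hσ
      exact max_eq_left (lonely_nonpos (by linarith [hσ.1]) hσ.1)
  linarith

lemma integral_repair_ge :
    ∫ σ in (0 : ℝ)..z, (1 + -(1 - z) * taylorQuad σ) ≤
      ∫ σ in (0 : ℝ)..z, (1 - 4 / (4 + σ) + z * (4 / (4 + σ))) := by
  have hcont : ContinuousOn (fun σ => 1 - 4 / (4 + σ) + z * (4 / (4 + σ))) (uIcc 0 z) :=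
    ((continuousOn_const.sub continuousOn_four_div_four_add).add
      (continuousOn_const.mul continuousOn_four_div_four_add)).mono
      (ordConnected_Ici.uIcc_subset le_rfl hz0)
  exact integral_mono_on hz0 (intervalIntegrable_affine_taylorQuad _ _ _ _)
    hcont.intervalIntegrable fun σ hσ => repair_ge_taylorQuad hz1 hσ.1

lemma taylorQuad_majorant_le_minorant :
    -1 * (min 1 (4 * z) - z) + (1 + z) * (taylorQuadPrimitive (min 1 (4 * z)) -
      taylorQuadPrimitive z) ≤ 1 * (z - 0) + -(1 - z) * (taylorQuadPrimitive z -
      taylorQuadPrimitive 0) := by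
  unfold taylorQuadPrimitive
  rcases le_total z (1 / 4) with hz | hz
  · rw [min_eq_right (by linarith)]
    -- the difference of the two sides is `z³ (10 - 31 z) / 24`
    nlinarith [mul_nonneg (pow_nonneg hz0 3) (show 0 ≤ 10 - 31 * z by linarith)]
  · rw [min_eq_left (by linarith)]
    nlinarith [mul_nonneg (sub_nonneg.2 hz) (sub_nonneg.2 hz1), sq_nonneg (z - 1 / 4),
      mul_nonneg (mul_nonneg (sub_nonneg.2 hz) (sub_nonneg.2 hz1)) hz0]

end

theorem stmt_19 (h : ℝ → ℝ) (hh : ∀ σ, h σ = 4 / (4 + σ))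
    (z : ℝ) (hz0 : 0 ≤ z) (hz1 : z ≤ 1) :
    (∫ σ in z..1, max 0 (h σ - 1 + z * h σ)) ≤ ∫ σ in (0:ℝ)..z, (1 - h σ + z * h σ) := by
  obtain rfl : h = fun σ => 4 / (4 + σ) := funext hh
  calc _ ≤ ∫ σ in z..min 1 (4 * z), (-1 + (1 + z) * taylorQuad σ) :=
        integral_lonely_le hz0 hz1
    _ ≤ ∫ σ in (0 : ℝ)..z, (1 + -(1 - z) * taylorQuad σ) := by
        rw [integral_affine_taylorQuad, integral_affine_taylorQuad]
        exact taylorQuad_majorant_le_minorant hz0 hz1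
    _ ≤ _ := integral_repair_ge hz0 hz1
end
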